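/- For every unitary operator U on C^d ⊗ C^d, the linear entropy of the associated state satisfies S_L(|U⟩) = (d²/(d²−1)) [ 1 − (1/d⁴) Tr( (U_{12} ⊗ U_{34}) (S_{13} ⊗ I_{24}) (U_{12} ⊗ U_{34})† (S_{13} ⊗ I_{24}) ) ]. -/

import Mathlib

/- Common setup: normalized linear entropy, uniform (Haar) averages over the
unitary group, entangling and disentangling power, and the operator-to-state
correspondence `X ↦ |X⟩ = (X₁₃ ⊗ I₂₄)|Ψ₊⟩₁₃₂₄`. -/

open MeasureTheory Matrix
open scoped ComplexConjugate Kronecker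

noncomputable section

/-- The unitary group `U(d)` of `ℂ^d`. -/
abbrev UG (d : ℕ) := Matrix.unitaryGroup (Fin d) ℂ

instance UG.topGroup (d : ℕ) : IsTopologicalGroup (UG d) where
  continuous_mul := by
    apply Continuous.subtype_mk
    exact (continuous_subtype_val.comp continuous_fst).matrix_mul
      (continuous_subtype_val.comp continuous_snd)
  continuous_inv := by
    apply Continuous.subtype_mk
    exact continuous_subtype_val.matrix_conjTranspose

instance UG.compactSpace (d : ℕ) : CompactSpace (UG d) := by
  have hbox : IsCompact {U : Matrix (Fin d) (Fin d) ℂ | ∀ i, U i ∈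
      {g : Fin d → ℂ | ∀ j, g j ∈ Metric.closedBall (0 : ℂ) 1}} :=
    isCompact_pi_infinite fun _ =>
      isCompact_pi_infinite fun _ => isCompact_closedBall 0 1
  have hclosed : IsClosed (Matrix.unitaryGroup (Fin d) ℂ : Set (Matrix (Fin d) (Fin d) ℂ)) := by
    have heq : (Matrix.unitaryGroup (Fin d) ℂ : Set (Matrix (Fin d) (Fin d) ℂ)) =
        (fun U : Matrix (Fin d) (Fin d) ℂ => U * star U) ⁻¹' {1} := by
      ext U
      simp [Set.mem_preimage, Matrix.mem_unitaryGroup_iff]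
    rw [heq]
    exact isClosed_singleton.preimage
      (continuous_id.matrix_mul continuous_id.matrix_conjTranspose)
  have hsub : (Matrix.unitaryGroup (Fin d) ℂ : Set (Matrix (Fin d) (Fin d) ℂ)) ⊆
      {U : Matrix (Fin d) (Fin d) ℂ | ∀ i, U i ∈
        {g : Fin d → ℂ | ∀ j, g j ∈ Metric.closedBall (0 : ℂ) 1}} := by
    intro U hU i j
    simp only [Set.mem_setOf_eq, Metric.mem_closedBall, dist_zero_right]
    have h1 : (U * star U) i i = 1 := by
      rw [Matrix.mem_unitaryGroup_iff.mp hU]; simp [Matrix.one_apply]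
    rw [Matrix.mul_apply] at h1
    have h2 : ∀ k, U i k * (star U) k i = (Complex.normSq (U i k) : ℂ) := fun k => by
      rw [Matrix.star_apply, Complex.star_def, Complex.mul_conj]
    rw [Finset.sum_congr rfl (fun k _ => h2 k), ← Complex.ofReal_sum] at h1
    have h3 : ∑ k, Complex.normSq (U i k) = 1 := by exact_mod_cast h1
    have h4 : Complex.normSq (U i j) ≤ 1 := by
      rw [← h3]
      exact Finset.single_le_sum (fun k _ => Complex.normSq_nonneg _) (Finset.mem_univ j)
    have h5 : ‖U i j‖ ^ 2 ≤ 1 := by rw [Complex.sq_norm]; exact h4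
    nlinarith [norm_nonneg (U i j)]
  exact isCompact_iff_compactSpace.mp (hbox.of_isClosed_subset hclosed hsub)

instance UG.measurableSpace (d : ℕ) : MeasurableSpace (UG d) := borel _
instance UG.borelSpace (d : ℕ) : BorelSpace (UG d) := ⟨rfl⟩

/-- The normalized Haar probability measure on `U(d)` (it satisfies `haar univ = 1`
since `UG d` is compact). -/
abbrev haarUG (d : ℕ) : Measure (UG d) := MeasureTheory.Measure.haar

/-- Reduced density matrix `ρ = Tr_B |ψ⟩⟨ψ|` of a pure state `ψ` of a bipartite
system `A ⊗ B`. -/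
def redDM {A B : Type*} [Fintype B] (ψ : A × B → ℂ) : Matrix A A ℂ :=
  Matrix.of fun a a' => ∑ b, ψ (a, b) * conj (ψ (a', b))

/-- Normalized linear entropy `S_L(ψ) = (D/(D-1)) (1 - Tr ρ²)` of a pure state of a
bipartite system whose parts have dimension `D = card A (= card B)`, where
`ρ = Tr_B |ψ⟩⟨ψ|`. -/
def SL {A B : Type*} [Fintype A] [Fintype B] (ψ : A × B → ℂ) : ℝ :=
  ((Fintype.card A : ℝ) / ((Fintype.card A : ℝ) - 1)) *
    (1 - (Matrix.trace (redDM ψ * redDM ψ)).re)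

/-- The first standard basis vector `|0⟩` of `ℂ^d`. -/
def e0 (d : ℕ) : Fin d → ℂ := fun i => if (i : ℕ) = 0 then 1 else 0

/-- Tensor product of two vectors of `ℂ^d`. -/
def tensorVec {d : ℕ} (v w : Fin d → ℂ) : Fin d × Fin d → ℂ := fun p => v p.1 * w p.2

/-- The maximally entangled state `|ψ₊⟩ = (1/√d) ∑ᵢ |ii⟩` of `ℂ^d ⊗ ℂ^d`. -/
def psiPlus (d : ℕ) : Fin d × Fin d → ℂ :=
  fun p => if p.1 = p.2 then ((Real.sqrt d : ℂ))⁻¹ else 0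

/-- The swap operator `S = ∑ᵢⱼ |ij⟩⟨ji|` on `ℂ^d ⊗ ℂ^d`. -/
def swapOp (d : ℕ) : Matrix (Fin d × Fin d) (Fin d × Fin d) ℂ :=
  Matrix.of fun p q => if p.1 = q.2 ∧ p.2 = q.1 then 1 else 0

/-- The index set of the four-fold tensor product `H₁ ⊗ H₂ ⊗ H₃ ⊗ H₄` (each factor
`ℂ^d`), grouped according to the bipartition `A = (12)`, `B = (34)`. -/
abbrev I4 (d : ℕ) := (Fin d × Fin d) × (Fin d × Fin d)

/-- The maximally entangled state `|Ψ₊⟩₁₃|₂₄ = (1/d) ∑ᵢⱼ |ij⟩₁₃ ⊗ |ij⟩₂₄`,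
written in the indexing `((i₁,i₂),(i₃,i₄))`. -/
def psi4 (d : ℕ) : I4 d → ℂ :=
  fun p => if p.1.1 = p.1.2 ∧ p.2.1 = p.2.2 then (d : ℂ)⁻¹ else 0

/-- `M₁₃ ⊗ N₂₄`: the operator acting as `M` on subsystems `1,3` and as `N` on
subsystems `2,4`. -/
def op1324 {d : ℕ} (M N : Matrix (Fin d × Fin d) (Fin d × Fin d) ℂ) :
    Matrix (I4 d) (I4 d) ℂ :=
  Matrix.of fun p q =>
    M (p.1.1, p.2.1) (q.1.1, q.2.1) * N (p.1.2, p.2.2) (q.1.2, q.2.2)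

/-- The state `|X⟩ = (X₁₃ ⊗ I₂₄)|Ψ₊⟩₁₃|₂₄` associated with an operator `X` on
`ℂ^d ⊗ ℂ^d`, regarded as a bipartite state for the bipartition `(12)|(34)`. -/
def assocVec {d : ℕ} (X : Matrix (Fin d × Fin d) (Fin d × Fin d) ℂ) : I4 d → ℂ :=
  (op1324 X 1).mulVec (psi4 d)

/-- The entangling power `ε(U)`: the average of `S_L(U |ψ₁⟩|ψ₂⟩)` over independent
uniformly (unitarily invariant) distributed pure states `|ψ₁⟩ = V|0⟩`, `|ψ₂⟩ = W|0⟩`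
with `V, W` Haar-distributed on `U(d)`. -/
def entPower (d : ℕ) (U : Matrix (Fin d × Fin d) (Fin d × Fin d) ℂ) : ℝ :=
  ∫ V : UG d, ∫ W : UG d,
    SL (U.mulVec (tensorVec
      ((V : Matrix (Fin d) (Fin d) ℂ).mulVec (e0 d))
      ((W : Matrix (Fin d) (Fin d) ℂ).mulVec (e0 d)))) ∂haarUG d ∂haarUG d

/-- The disentangling power `δ(U) = 1 - ∫∫ S_L(U (V ⊗ W)|ψ₊⟩) dV dW`, with `V, W`
Haar-distributed on `U(d)`. -/
def disPower (d : ℕ) (U : Matrix (Fin d × Fin d) (Fin d × Fin d) ℂ) : ℝ :=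
  1 - ∫ V : UG d, ∫ W : UG d,
    SL (U.mulVec
      (((V : Matrix (Fin d) (Fin d) ℂ) ⊗ₖ (W : Matrix (Fin d) (Fin d) ℂ)).mulVec
        (psiPlus d))) ∂haarUG d ∂haarUG d

/-- `V₁ ⊗ W₂ ⊗ V₃ ⊗ W₄` acting on `H₁ ⊗ H₂ ⊗ H₃ ⊗ H₄`. -/
def fourAct {d : ℕ} (V W : Matrix (Fin d) (Fin d) ℂ) : Matrix (I4 d) (I4 d) ℂ :=
  Matrix.of fun p q => V p.1.1 q.1.1 * W p.1.2 q.1.2 * V p.2.1 q.2.1 * W p.2.2 q.2.2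

/-- The projector `P⁺₁₃|₂₄ = |Ψ₊⟩⟨Ψ₊|` onto the maximally entangled state between
subsystems `13` and `24`. -/
def Pplus4 (d : ℕ) : Matrix (I4 d) (I4 d) ℂ :=
  Matrix.vecMulVec (psi4 d) fun p => conj (psi4 d p)

/-- The twirl `Ω = ∫∫ (V₁⊗W₂⊗V₃⊗W₄) P⁺₁₃|₂₄ (V₁⊗W₂⊗V₃⊗W₄)† dV dW` (defined
entrywise). -/
def Omega (d : ℕ) : Matrix (I4 d) (I4 d) ℂ :=
  Matrix.of fun p q => ∫ V : UG d, ∫ W : UG d,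
    (fourAct (V : Matrix (Fin d) (Fin d) ℂ) (W : Matrix (Fin d) (Fin d) ℂ) * Pplus4 d *
      (fourAct (V : Matrix (Fin d) (Fin d) ℂ) (W : Matrix (Fin d) (Fin d) ℂ))ᴴ) p q
    ∂haarUG d ∂haarUG d

/-- A permutation of the standard product basis `{|i⟩ ⊗ |j⟩}` of `ℂ^d ⊗ ℂ^d`. -/
def IsPermutationMatrix {d : ℕ} (U : Matrix (Fin d × Fin d) (Fin d × Fin d) ℂ) : Prop :=
  ∃ σ : Equiv.Perm (Fin d × Fin d), ∀ p q, U p q = if p = σ q then 1 else 0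

/-- A permutation of the standard product basis, up to phases on the basis vectors. -/
def IsPermutationMatrixUpToPhases {d : ℕ}
    (U : Matrix (Fin d × Fin d) (Fin d × Fin d) ℂ) : Prop :=
  ∃ σ : Equiv.Perm (Fin d × Fin d), ∃ θ : Fin d × Fin d → ℂ,
    (∀ q, ‖θ q‖ = 1) ∧ ∀ p q, U p q = if p = σ q then θ q else 0

section Aux

variable {d : ℕ} (U : Matrix (Fin d × Fin d) (Fin d × Fin d) ℂ)

lemma assocVec_eq' (p : I4 d) :
    assocVec U p = (d : ℂ)⁻¹ * U (p.1.1, p.2.1) (p.1.2, p.2.2) := by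
  obtain ⟨⟨i1, i2⟩, i3, i4⟩ := p
  simp only [assocVec, mulVec, dotProduct, op1324, psi4, Matrix.of_apply,
    Fintype.sum_prod_type, Matrix.one_apply, Prod.mk.injEq, mul_ite, mul_zero, mul_one, ite_mul,
    zero_mul, Finset.sum_ite_eq, Finset.sum_ite_eq', Finset.mem_univ, if_true]
  simp [ite_and, Finset.sum_ite_eq, Finset.sum_ite_eq', mul_comm]

private lemma sum_nested8 {α M : Type*} [Fintype α] [AddCommMonoid M]
    (g : α × (α × (α × (α × (α × (α × (α × α)))))) → M) :
    ∑ x, g x = ∑ a, ∑ b, ∑ c, ∑ e, ∑ f, ∑ k, ∑ p, ∑ q, g (a, b, c, e, f, k, p, q) := by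
  simp [Fintype.sum_prod_type]

private lemma sum_perm8 {α M : Type*} [Fintype α] [AddCommMonoid M]
    (g : α → α → α → α → α → α → α → α → M) :
    (∑ a, ∑ b, ∑ c, ∑ e, ∑ f, ∑ k, ∑ p, ∑ q, g a p c f e q b k)
      = ∑ a, ∑ b, ∑ c, ∑ e, ∑ f, ∑ k, ∑ p, ∑ q, g a b c e f k p q := by
  rw [← sum_nested8 (fun x => g x.1 x.2.2.2.2.2.2.1 x.2.2.1 x.2.2.2.2.1 x.2.2.2.1
        x.2.2.2.2.2.2.2 x.2.1 x.2.2.2.2.2.1),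
      ← sum_nested8 (fun x => g x.1 x.2.1 x.2.2.1 x.2.2.2.1 x.2.2.2.2.1 x.2.2.2.2.2.1
        x.2.2.2.2.2.2.1 x.2.2.2.2.2.2.2)]
  exact Fintype.sum_equiv
    ⟨fun x => (x.1, x.2.2.2.2.2.2.1, x.2.2.1, x.2.2.2.2.1, x.2.2.2.1, x.2.2.2.2.2.2.2,
        x.2.1, x.2.2.2.2.2.1),
     fun x => (x.1, x.2.2.2.2.2.2.1, x.2.2.1, x.2.2.2.2.1, x.2.2.2.1, x.2.2.2.2.2.2.2,
        x.2.1, x.2.2.2.2.2.1),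
     fun x => rfl, fun x => rfl⟩ _ _ (fun x => rfl)

/-- The clean eight-fold sum appearing on both sides. -/
def bigSum : ℂ :=
  ∑ a, ∑ b, ∑ c, ∑ e, ∑ f, ∑ k, ∑ p, ∑ q,
    U (a, p) (b, q) * star (U (c, p) (e, q)) * (U (c, f) (e, k) * star (U (a, f) (b, k)))

lemma trace_rho_sq :
    Matrix.trace (redDM (assocVec U) * redDM (assocVec U)) = ((d : ℂ)⁻¹) ^ 4 * bigSum U := by
  have hψ : assocVec U = fun p : I4 d => (d : ℂ)⁻¹ * U (p.1.1, p.2.1) (p.1.2, p.2.2) :=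
    funext (assocVec_eq' U)
  rw [hψ, bigSum]
  simp only [Matrix.trace, Matrix.diag, Matrix.mul_apply, redDM, Matrix.of_apply,
    Fintype.sum_prod_type, _root_.map_mul, map_inv₀, Complex.conj_natCast,
    Finset.mul_sum, Finset.sum_mul, ← Complex.star_def, star_mul', star_inv₀, star_natCast]
  refine Finset.sum_congr rfl fun a _ => Finset.sum_congr rfl fun b _ =>
    Finset.sum_congr rfl fun c _ => Finset.sum_congr rfl fun e _ =>
    Finset.sum_congr rfl fun f _ => Finset.sum_congr rfl fun k _ =>
    Finset.sum_congr rfl fun p _ => Finset.sum_congr rfl fun q _ => by ring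

lemma trace_big :
    Matrix.trace ((U ⊗ₖ U) * op1324 (swapOp d) 1 * (U ⊗ₖ U)ᴴ * op1324 (swapOp d) 1)
      = bigSum U := by
  rw [bigSum, ← sum_perm8 (fun a b c e f k p q =>
    U (a, p) (b, q) * star (U (c, p) (e, q)) * (U (c, f) (e, k) * star (U (a, f) (b, k))))]
  simp only [Matrix.trace, Matrix.diag, Matrix.mul_apply, Matrix.conjTranspose_apply,
    Matrix.kroneckerMap_apply, op1324, swapOp, Matrix.of_apply, Matrix.one_apply,
    Fintype.sum_prod_type, Prod.mk.injEq, ite_and, mul_ite, mul_zero, mul_one, ite_mul, zero_mul,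
    Finset.sum_ite_eq, Finset.sum_ite_eq', Finset.mem_univ, if_true, Finset.sum_ite_irrel,
    Finset.sum_const_zero, star_zero, star_one, apply_ite (star : ℂ → ℂ), star_mul']
  refine Finset.sum_congr rfl fun a _ => Finset.sum_congr rfl fun b _ =>
    Finset.sum_congr rfl fun c _ => Finset.sum_congr rfl fun e _ =>
    Finset.sum_congr rfl fun f _ => Finset.sum_congr rfl fun k _ =>
    Finset.sum_congr rfl fun p _ => Finset.sum_congr rfl fun q _ => by ring

lemma trace_rho_sq_real :
    ((Matrix.trace (redDM (assocVec U) * redDM (assocVec U))).re : ℂ)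
      = Matrix.trace (redDM (assocVec U) * redDM (assocVec U)) := by
  set ρ := redDM (assocVec U) with hρ
  have hherm : ∀ a a', ρ a' a = conj (ρ a a') := by
    intro a a'
    simp only [hρ, redDM, Matrix.of_apply, map_sum, _root_.map_mul, Complex.conj_conj]
    exact Finset.sum_congr rfl fun b _ => mul_comm _ _
  have ht : Matrix.trace (ρ * ρ) = ((∑ a, ∑ a', Complex.normSq (ρ a a') : ℝ) : ℂ) := by
    simp only [Matrix.trace, Matrix.diag, Matrix.mul_apply]
    push_cast
    refine Finset.sum_congr rfl fun a _ => Finset.sum_congr rfl fun a' _ => ?_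
    rw [hherm a a', Complex.mul_conj]
  rw [ht]
  simp

end Aux

/-- For every unitary `U` on `ℂ^d ⊗ ℂ^d`,
`S_L(|U⟩) = (d²/(d²−1)) [1 − (1/d⁴) Tr((U₁₂ ⊗ U₃₄)(S₁₃ ⊗ I₂₄)(U₁₂ ⊗ U₃₄)†(S₁₃ ⊗ I₂₄))]`. -/
theorem SL_assocVec_eq_trace_formula (d : ℕ) (hd : 2 ≤ d)
    (U : Matrix (Fin d × Fin d) (Fin d × Fin d) ℂ)
    (hU : U ∈ Matrix.unitaryGroup (Fin d × Fin d) ℂ) :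
    (SL (assocVec U) : ℂ) = (d : ℂ) ^ 2 / ((d : ℂ) ^ 2 - 1) *
      (1 - ((d : ℂ) ^ 4)⁻¹ *
        Matrix.trace ((U ⊗ₖ U) * op1324 (swapOp d) 1 * (U ⊗ₖ U)ᴴ * op1324 (swapOp d) 1)) := by
  have hd0 : (d : ℂ) ≠ 0 := Nat.cast_ne_zero.mpr (by omega)
  have key : Matrix.trace ((U ⊗ₖ U) * op1324 (swapOp d) 1 * (U ⊗ₖ U)ᴴ * op1324 (swapOp d) 1)
      = (d : ℂ) ^ 4 * Matrix.trace (redDM (assocVec U) * redDM (assocVec U)) := by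
    rw [trace_big, trace_rho_sq]
    field_simp
  rw [key]
  have hcard : (Fintype.card (Fin d × Fin d) : ℝ) = (d : ℝ) * d := by
    simp [Fintype.card_prod]
  rw [SL, hcard]
  push_cast
  rw [trace_rho_sq_real]
  have h4 : ((d : ℂ) ^ 4)⁻¹ * ((d : ℂ) ^ 4 * Matrix.trace (redDM (assocVec U) * redDM (assocVec U)))
      = Matrix.trace (redDM (assocVec U) * redDM (assocVec U)) := by
    rw [← mul_assoc, inv_mul_cancel₀ (pow_ne_zero 4 hd0), one_mul]
  rw [h4]
  ring
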